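/- arXiv:1004.1303 — 2 statements merged into one kernel-verified Lean document; each statement's English description precedes it below -/
import Mathlib

section
/- The set F = {(c,b) : 1 ≤ c ≤ n, 1 ≤ b ≤ n−1} ∪ {(c,b) : 1 ≤ c ≤ n, n ≤ b ≤ 2(n−1), c+b ≤ 2n−1} has exactly 3n(n−1)/2 elements, and consequently the number of isomorphism classes of indecomposable modules over the endomorphism algebra of a maximal rigid object in the cluster tube C_n equals 3n(n−1)/2 − (n−1) = (3/2)n² − (5/2)n + 1. -/
/-- The set `F` of indecomposables finitely presented by a maximal rigid object of the
cluster tube `C_n`:  pairs `(c,b)` with `1 ≤ c ≤ n` and either `1 ≤ b ≤ n-1`, or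
`n ≤ b ≤ 2(n-1)` and `c + b ≤ 2n-1`. -/
def clusterTubeF (n : ℕ) : Finset (ℕ × ℕ) :=
  ((Finset.Icc 1 n) ×ˢ (Finset.Icc 1 (2 * (n - 1)))).filter
    (fun p => p.2 ≤ n - 1 ∨ (n ≤ p.2 ∧ p.1 + p.2 ≤ 2 * n - 1))

open Finset

/-- Fiberwise count: for each first coordinate `c ∈ [1,n]` there are
`(n-1) + (n-c)` admissible second coordinates. -/
lemma clusterTubeF_card_eq_sum (n : ℕ) (hn : 2 ≤ n) :
    (clusterTubeF n).card = ∑ c ∈ Icc 1 n, ((n - 1) + (n - c)) := by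
  rw [clusterTubeF, card_filter, Finset.sum_product]
  refine Finset.sum_congr rfl fun c hc => ?_
  rw [← card_filter]
  have hc1 : 1 ≤ c := (mem_Icc.mp hc).1
  have hcn : c ≤ n := (mem_Icc.mp hc).2
  rw [filter_or, card_union_of_disjoint]
  · congr 1
    · have h1 : Finset.filter (fun b => b ≤ n - 1) (Icc 1 (2 * (n - 1))) = Icc 1 (n - 1) := by
        ext b; simp [mem_filter, mem_Icc]; omega
      rw [h1, Nat.card_Icc]; omega
    · have h2 : Finset.filter (fun b => n ≤ b ∧ c + b ≤ 2 * n - 1) (Icc 1 (2 * (n - 1)))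
          = Icc n (2 * n - 1 - c) := by
        ext b; simp [mem_filter, mem_Icc]; omega
      rw [h2, Nat.card_Icc]; omega
  · rw [disjoint_filter]
    intro b _ hb
    omega

/-- `F` has exactly `3n(n-1)/2` elements; consequently the number of isomorphism classes
of indecomposable modules over the endomorphism algebra of a maximal rigid object of the
cluster tube `C_n` (which is `|F|` minus the `n-1` summands of `ΣT`) equals
`3n(n-1)/2 - (n-1) = (3n² - 5n + 2)/2`. -/
theorem clusterTubeF_card (n : ℕ) (hn : 2 ≤ n) :
    2 * (clusterTubeF n).card = 3 * n * (n - 1) ∧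
    2 * ((clusterTubeF n).card - (n - 1)) = 3 * n ^ 2 - 5 * n + 2 := by
  have h := clusterTubeF_card_eq_sum n hn
  have hsum : ∑ c ∈ Icc 1 n, ((n - 1) + (n - c)) = n * (n - 1) + ∑ c ∈ Icc 1 n, (n - c) := by
    rw [Finset.sum_add_distrib, Finset.sum_const, Nat.card_Icc, smul_eq_mul]
    norm_num
  have hg : ∑ c ∈ Icc 1 n, (n - c) = ∑ k ∈ Finset.range n, k := by
    rw [← Finset.Ico_add_one_right_eq_Icc, Finset.sum_Ico_eq_sum_range]
    have hr := Finset.sum_range_reflect (fun i => i) n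
    rw [← hr]
    exact Finset.sum_congr rfl fun k hk => by simp at hk ⊢; omega
  rw [Finset.sum_range_id] at hg
  have hdvd : 2 ∣ n * (n - 1) := by
    rcases Nat.even_or_odd n with he | ho
    · exact Dvd.dvd.mul_right he.two_dvd _
    · obtain ⟨k, hk⟩ := ho
      exact Dvd.dvd.mul_left ⟨k, by omega⟩ _
  have hpar : 2 * (n * (n - 1) / 2) = n * (n - 1) := Nat.mul_div_cancel' hdvd
  have h2 : 2 * (clusterTubeF n).card = 2 * (n * (n - 1)) + 2 * (n * (n - 1) / 2) := by
    rw [h, hsum, hg]; ring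
  have hcard : 2 * (clusterTubeF n).card = 3 * (n * (n - 1)) := by rw [h2, hpar]; ring
  have hmp : n * (n - 1) = n * n - n := by
    rw [Nat.mul_sub_one, Nat.mul_comm]
  have hp2 : n ^ 2 = n * n := sq n
  have hle2 : 2 * n ≤ n * n := Nat.mul_le_mul_right n hn
  exact ⟨by rw [hcard]; ring, by omega⟩
end

section
/- Let A = kQ̃/I_{Q̃} for Q̃ ∈ Q̃_{n−1} and suppose char k ≠ 3. Then A is isomorphic to the Jacobian algebra of the quiver with potential (Q̃, W̃), where W̃ is the sum of the cube of the unique loop and all oriented 3-cycles of Q̃. -/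
open scoped Classical

/-- A finite quiver on the vertex set `Fin m`. -/
structure QuiverData (m : ℕ) where
  E : Type
  fintypeE : Fintype E
  decE : DecidableEq E
  s : E → Fin m
  t : E → Fin m

attribute [instance] QuiverData.fintypeE QuiverData.decE

namespace QuiverData

variable {m : ℕ} (Q : QuiverData m)

def IsLoop (e : Q.E) : Prop := Q.s e = Q.t e

/-- adjacency in the underlying graph -/
def Adj (i j : Fin m) : Prop :=
  i ≠ j ∧ ∃ e, (Q.s e = i ∧ Q.t e = j) ∨ (Q.s e = j ∧ Q.t e = i)

def neighbours (i : Fin m) : Set (Fin m) := {j | Q.Adj i j}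

/-- the underlying simple graph -/
def graph : SimpleGraph (Fin m) where
  Adj := Q.Adj
  symm := by
    constructor
    intro i j h
    exact ⟨Ne.symm h.1, by obtain ⟨e, he⟩ := h.2; exact ⟨e, he.symm⟩⟩
  loopless := by constructor; intro i h; exact h.1 rfl

/-- `(e, f, g)` is an oriented 3-cycle (with three distinct vertices) -/
def CycTriple (e f g : Q.E) : Prop :=
  Q.t e = Q.s f ∧ Q.t f = Q.s g ∧ Q.t g = Q.s e ∧
  Q.s e ≠ Q.s f ∧ Q.s f ≠ Q.s g ∧ Q.s g ≠ Q.s e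

def OnThreeCycle (e : Q.E) : Prop := ∃ f g, Q.CycTriple e f g

/-- the number of (oriented) 3-cycles of `Q` -/
noncomputable def tcount : ℕ :=
  {p : Q.E × Q.E × Q.E | Q.CycTriple p.1 p.2.1 p.2.2}.ncard / 3

/-- membership in the class `Q̃_{m}` of quivers of endomorphism algebras of
maximal rigid objects (Vatne's description), with loop `φ` at the vertex `c`:
all non-trivial minimal cycles of the underlying graph are oriented 3-cycles
(in particular no multiple arrows or 2-cycles); every vertex has at most four
neighbours; a vertex with four neighbours has its adjacent arrows split between
two 3-cycles; a vertex with three neighbours has two adjacent arrows on a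
3-cycle and one on none; there is exactly one loop, at a vertex `c` with at
most one neighbour, or with two neighbours and traversed by a 3-cycle. -/
structure IsTilde (Q : QuiverData m) (c : Fin m) (φ : Q.E) : Prop where
  loop_s : Q.s φ = c
  loop_t : Q.t φ = c
  loop_unique : ∀ e, Q.IsLoop e → e = φ
  no_mult : ∀ e f, Q.s e = Q.s f → Q.t e = Q.t f → e = f
  no_two_cycle : ∀ e f, Q.s e = Q.t f → Q.t e = Q.s f → Q.IsLoop e
  cycles_length_three : ∀ (v : Fin m) (W : Q.graph.Walk v v), W.IsCycle → W.length = 3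
  cycles_oriented : ∀ i j l : Fin m, Q.Adj i j → Q.Adj j l → Q.Adj l i →
    ∃ e f g, Q.CycTriple e f g ∧ ({Q.s e, Q.s f, Q.s g} : Set (Fin m)) = {i, j, l}
  card_neighbours : ∀ i, (Q.neighbours i).ncard ≤ 4
  four_neighbours : ∀ i, (Q.neighbours i).ncard = 4 →
    ∀ e, (Q.s e = i ∨ Q.t e = i) → ¬ Q.IsLoop e → Q.OnThreeCycle e
  three_neighbours : ∀ i, (Q.neighbours i).ncard = 3 →
    ∃ e, (Q.s e = i ∨ Q.t e = i) ∧ ¬ Q.IsLoop e ∧ ¬ Q.OnThreeCycle e ∧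
      ∀ f, (Q.s f = i ∨ Q.t f = i) → ¬ Q.IsLoop f → f ≠ e → Q.OnThreeCycle f
  loop_vertex : (Q.neighbours c).ncard ≤ 1 ∨
    ((Q.neighbours c).ncard = 2 ∧ ∃ e f g, Q.CycTriple e f g ∧ Q.s e = c)

/-- `e` and `f` are consecutive arrows forming a relation: `f ∘ e` with
either `e = f` the loop, or `e, f` consecutive on a 3-cycle -/
def Bad (e f : Q.E) : Prop :=
  (Q.IsLoop e ∧ e = f) ∨ ∃ g, Q.CycTriple e f g

/-- `l` is the list of arrows of a path from `i` to `j` which is nonzero in the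
quotient algebra (no relation-subpath) -/
def GoodPath (i j : Fin m) (l : List Q.E) : Prop :=
  l.Chain' (fun e f => Q.t e = Q.s f ∧ ¬ Q.Bad e f) ∧
  (l.head?.elim (i = j) (fun e => Q.s e = i)) ∧
  (l.getLast?.elim (i = j) (fun e => Q.t e = j))

/-- the Cartan matrix of the algebra `kQ/I_Q`: the `(i,j)` entry is the number
of nonzero paths from `i` to `j` -/
noncomputable def cartan : Matrix (Fin m) (Fin m) ℤ :=
  fun i j => ({l : List Q.E | Q.GoodPath i j l}.ncard : ℤ)

end QuiverData

open FreeAlgebra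

/-- generators of the path algebra: vertex idempotents and arrows -/
inductive PGen {m : ℕ} (Q : QuiverData m) : Type
  | v : Fin m → PGen Q
  | a : Q.E → PGen Q

/-- the defining relations of the algebra `kQ/I_Q`, with the relations `φ²` and
all length-2 subpaths of oriented 3-cycles.  (Products are written in
composition order: the path "`e` then `f`" is `ι (a f) * ι (a e)`.) -/
inductive PathRel (k : Type) [Field k] {m : ℕ} (Q : QuiverData m) :
    FreeAlgebra k (PGen Q) → FreeAlgebra k (PGen Q) → Prop
  | vertex_mul (i j : Fin m) :
      PathRel k Q (ι k (PGen.v (Q := Q) i) * ι k (PGen.v j))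
        (if i = j then ι k (PGen.v (Q := Q) i) else 0)
  | vertex_sum : PathRel k Q (∑ i : Fin m, ι k (PGen.v (Q := Q) i)) 1
  | target_arrow (e : Q.E) :
      PathRel k Q (ι k (PGen.v (Q.t e)) * ι k (PGen.a e)) (ι k (PGen.a e))
  | arrow_source (e : Q.E) :
      PathRel k Q (ι k (PGen.a e) * ι k (PGen.v (Q.s e))) (ι k (PGen.a e))
  | rel_zero (e f : Q.E) (h : Q.Bad e f) :
      PathRel k Q (ι k (PGen.a f) * ι k (PGen.a e)) 0

/-- the algebra `kQ/I_Q` -/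
def PathAlg (k : Type) [Field k] {m : ℕ} (Q : QuiverData m) : Type :=
  RingQuot (PathRel k Q)

noncomputable instance (k : Type) [Field k] {m : ℕ} (Q : QuiverData m) :
    Ring (PathAlg k Q) := by unfold PathAlg; infer_instance

noncomputable instance (k : Type) [Field k] {m : ℕ} (Q : QuiverData m) :
    Algebra k (PathAlg k Q) := by unfold PathAlg; infer_instance

/-- the cyclic derivative `∂_e W̃` of the potential
`W̃ = φ³ + (sum of all oriented 3-cycles)` with respect to the arrow `e`:
`3φ²` if `e = φ` is the loop, plus, for each 3-cycle `(e, f, g)` through `e`,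
the complementary path `g ∘ f`. -/
noncomputable def cycDer (k : Type) [Field k] {m : ℕ} (Q : QuiverData m)
    (e : Q.E) : FreeAlgebra k (PGen Q) :=
  (if Q.IsLoop e then (3 : k) • (ι k (PGen.a e) * ι k (PGen.a e)) else 0) +
    ∑ p ∈ Finset.univ.filter (fun p : Q.E × Q.E => Q.CycTriple e p.1 p.2),
      ι k (PGen.a p.2) * ι k (PGen.a p.1)

/-- the defining relations of the Jacobian algebra of `(Q̃, W̃)`: the path
algebra relations together with the vanishing of all cyclic derivatives of the
potential `W̃`. -/
inductive JacRel (k : Type) [Field k] {m : ℕ} (Q : QuiverData m) :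
    FreeAlgebra k (PGen Q) → FreeAlgebra k (PGen Q) → Prop
  | vertex_mul (i j : Fin m) :
      JacRel k Q (ι k (PGen.v (Q := Q) i) * ι k (PGen.v j))
        (if i = j then ι k (PGen.v (Q := Q) i) else 0)
  | vertex_sum : JacRel k Q (∑ i : Fin m, ι k (PGen.v (Q := Q) i)) 1
  | target_arrow (e : Q.E) :
      JacRel k Q (ι k (PGen.v (Q.t e)) * ι k (PGen.a e)) (ι k (PGen.a e))
  | arrow_source (e : Q.E) :
      JacRel k Q (ι k (PGen.a e) * ι k (PGen.v (Q.s e))) (ι k (PGen.a e))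
  | der_zero (e : Q.E) : JacRel k Q (cycDer k Q e) 0

/-- the Jacobian algebra of the quiver with potential `(Q̃, W̃)` -/
def JacAlg (k : Type) [Field k] {m : ℕ} (Q : QuiverData m) : Type :=
  RingQuot (JacRel k Q)

noncomputable instance (k : Type) [Field k] {m : ℕ} (Q : QuiverData m) :
    Ring (JacAlg k Q) := by unfold JacAlg; infer_instance

noncomputable instance (k : Type) [Field k] {m : ℕ} (Q : QuiverData m) :
    Algebra k (JacAlg k Q) := by unfold JacAlg; infer_instance

/-!
Both algebras are quotients of the same free algebra by the vertex relations together with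
further relations, so it suffices to check that each family of relations holds in the other
quotient. At the loop, `∂_φ W̃ = 3φ²` generates the same relation as `φ²` because `3` is a unit.
Any other arrow `g` lies on at most one oriented 3-cycle `(g, e, f)`, since two of them would
produce a 4-cycle or a double arrow; hence `∂_g W̃` is the single path `f e`, and these
paths are exactly the length-2 subpaths of 3-cycles generating `I_{Q̃}`.
-/

namespace SimpleGraph

variable {V : Type*} {G : SimpleGraph V}

theorem Walk.isCycle_cons_cons_cons_cons {a b c d : V} (hab : G.Adj a b) (hbc : G.Adj b c)
    (hcd : G.Adj c d) (hda : G.Adj d a) (hac : a ≠ c) (hbd : b ≠ d) :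
    (Walk.cons hab (.cons hbc (.cons hcd (.cons hda .nil)))).IsCycle := by
  rw [Walk.isCycle_iff_isPath_tail_and_le_length]
  refine ⟨?_, by simp⟩
  simp [Walk.isPath_def, hbd, hbc.ne, hcd.ne, hac.symm, hab.ne.symm, hda.ne]

end SimpleGraph

namespace RingQuot

variable {S A : Type*} [CommSemiring S] [Semiring A] [Algebra S A]

noncomputable def algEquivOfRel {r s : A → A → Prop}
    (hrs : ∀ ⦃x y⦄, r x y → mkAlgHom S s x = mkAlgHom S s y)
    (hsr : ∀ ⦃x y⦄, s x y → mkAlgHom S r x = mkAlgHom S r y) :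
    RingQuot r ≃ₐ[S] RingQuot s :=
  AlgEquiv.ofAlgHom (liftAlgHom S ⟨_, hrs⟩) (liftAlgHom S ⟨_, hsr⟩)
    (ringQuot_ext' S _ _ <| AlgHom.ext fun _ => by simp)
    (ringQuot_ext' S _ _ <| AlgHom.ext fun _ => by simp)

end RingQuot

namespace QuiverData

variable {m : ℕ} {Q : QuiverData m} {e f g : Q.E}

theorem CycTriple.rotate (h : Q.CycTriple e f g) : Q.CycTriple f g e :=
  ⟨h.2.1, h.2.2.1, h.1, h.2.2.2.2.1, h.2.2.2.2.2, h.2.2.2.1⟩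

theorem CycTriple.not_isLoop (h : Q.CycTriple e f g) : ¬ Q.IsLoop e :=
  fun hl => h.2.2.2.1 (hl.trans h.1)

theorem graph_adj_of_not_isLoop (he : ¬ Q.IsLoop e) : Q.graph.Adj (Q.s e) (Q.t e) :=
  ⟨he, e, Or.inl ⟨rfl, rfl⟩⟩

def CycTripleUnique (Q : QuiverData m) : Prop :=
  ∀ ⦃g e f e' f' : Q.E⦄, Q.CycTriple g e f → Q.CycTriple g e' f' → e = e' ∧ f = f'

/-- Two 3-cycles through `g` leaving `Q.t g` by different arrows would close up to a 4-cycle. -/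
theorem cycTripleUnique_of_cycles_length_three
    (hmult : ∀ e f, Q.s e = Q.s f → Q.t e = Q.t f → e = f)
    (hcyc : ∀ (v : Fin m) (W : Q.graph.Walk v v), W.IsCycle → W.length = 3) :
    Q.CycTripleUnique := by
  intro g e f e' f' h h'
  suffices he : e = e' by
    subst he
    exact ⟨rfl, hmult f f' (h.2.1.symm.trans h'.2.1) (h.2.2.1.trans h'.2.2.1.symm)⟩
  by_contra hne
  have hs : Q.s e = Q.s e' := h.1.symm.trans h'.1
  have ht : Q.t e ≠ Q.t e' := fun ht => hne (hmult e e' hs ht)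
  have adj_e := graph_adj_of_not_isLoop h.rotate.not_isLoop
  have adj_e' := graph_adj_of_not_isLoop h'.rotate.not_isLoop
  have adj_f := graph_adj_of_not_isLoop h.rotate.rotate.not_isLoop
  have adj_f' := graph_adj_of_not_isLoop h'.rotate.rotate.not_isLoop
  rw [← hs] at adj_e'
  rw [← h'.2.1, h'.2.2.1, ← h.2.2.1] at adj_f'
  rw [← h.2.1] at adj_f
  -- the 4-cycle `t e — s e — t e' — t f — t e`
  have hst : Q.s e ≠ Q.t f := by
    rw [← h.1, h.2.2.1]
    exact fun hg => h.not_isLoop hg.symm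
  have := hcyc _ _ (SimpleGraph.Walk.isCycle_cons_cons_cons_cons
    adj_e.symm adj_e' adj_f' adj_f.symm ht hst)
  simp at this

end QuiverData

section Jacobian

variable (k : Type) [Field k] {m : ℕ} {Q : QuiverData m}

theorem cycDer_of_isLoop {e : Q.E} (he : Q.IsLoop e) :
    cycDer k Q e = (3 : k) • (ι k (PGen.a e) * ι k (PGen.a e)) := by
  have hnone : Finset.univ.filter (fun p : Q.E × Q.E => Q.CycTriple e p.1 p.2) = ∅ :=
    Finset.filter_eq_empty_iff.mpr fun _ _ hc => hc.not_isLoop he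
  rw [cycDer, if_pos he, hnone, Finset.sum_empty, add_zero]

theorem cycDer_of_cycTriple (hQ : Q.CycTripleUnique) {g e f : Q.E} (hc : Q.CycTriple g e f) :
    cycDer k Q g = ι k (PGen.a f) * ι k (PGen.a e) := by
  have hone : Finset.univ.filter (fun p : Q.E × Q.E => Q.CycTriple g p.1 p.2) = {(e, f)} := by
    ext ⟨e', f'⟩
    simp only [Finset.mem_filter, Finset.mem_univ, true_and, Finset.mem_singleton, Prod.mk.injEq]
    exact ⟨fun h' => hQ h' hc, by rintro ⟨rfl, rfl⟩; exact hc⟩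
  rw [cycDer, if_neg hc.not_isLoop, zero_add, hone, Finset.sum_singleton]

variable {k}

theorem mkAlgHom_jacRel_eq_of_pathRel (hchar : (3 : k) ≠ 0) (hQ : Q.CycTripleUnique)
    ⦃x y : FreeAlgebra k (PGen Q)⦄ (hxy : PathRel k Q x y) :
    RingQuot.mkAlgHom k (JacRel k Q) x = RingQuot.mkAlgHom k (JacRel k Q) y := by
  cases hxy with
  | vertex_mul i j => exact RingQuot.mkAlgHom_rel k (JacRel.vertex_mul i j)
  | vertex_sum => exact RingQuot.mkAlgHom_rel k JacRel.vertex_sum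
  | target_arrow e => exact RingQuot.mkAlgHom_rel k (JacRel.target_arrow e)
  | arrow_source e => exact RingQuot.mkAlgHom_rel k (JacRel.arrow_source e)
  | rel_zero e f hb =>
    have hder (g : Q.E) : RingQuot.mkAlgHom k (JacRel k Q) (cycDer k Q g) = 0 :=
      (RingQuot.mkAlgHom_rel k (JacRel.der_zero g)).trans (map_zero _)
    rw [map_zero]
    rcases hb with ⟨hl, rfl⟩ | ⟨g, hc⟩
    · have h3 := hder e
      rw [cycDer_of_isLoop k hl, map_smul] at h3
      exact (smul_eq_zero.mp h3).resolve_left hchar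
    · simpa only [cycDer_of_cycTriple k hQ hc.rotate.rotate] using hder g

theorem mkAlgHom_pathRel_eq_of_jacRel ⦃x y : FreeAlgebra k (PGen Q)⦄ (hxy : JacRel k Q x y) :
    RingQuot.mkAlgHom k (PathRel k Q) x = RingQuot.mkAlgHom k (PathRel k Q) y := by
  have hbad {e f : Q.E} (hb : Q.Bad e f) :
      RingQuot.mkAlgHom k (PathRel k Q) (ι k (PGen.a f) * ι k (PGen.a e)) = 0 :=
    (RingQuot.mkAlgHom_rel k (PathRel.rel_zero e f hb)).trans (map_zero _)
  cases hxy with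
  | vertex_mul i j => exact RingQuot.mkAlgHom_rel k (PathRel.vertex_mul i j)
  | vertex_sum => exact RingQuot.mkAlgHom_rel k PathRel.vertex_sum
  | target_arrow e => exact RingQuot.mkAlgHom_rel k (PathRel.target_arrow e)
  | arrow_source e => exact RingQuot.mkAlgHom_rel k (PathRel.arrow_source e)
  | der_zero e =>
    have hsum : RingQuot.mkAlgHom k (PathRel k Q)
        (∑ p ∈ Finset.univ.filter (fun p : Q.E × Q.E => Q.CycTriple e p.1 p.2),
          ι k (PGen.a p.2) * ι k (PGen.a p.1)) = 0 := by
      rw [map_sum]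
      exact Finset.sum_eq_zero fun p hp => hbad (Or.inr ⟨e, (Finset.mem_filter.mp hp).2.rotate⟩)
    rw [map_zero, cycDer, map_add, hsum, add_zero]
    split_ifs with hl
    · rw [map_smul, hbad (Or.inl ⟨hl, rfl⟩), smul_zero]
    · exact map_zero _

end Jacobian

theorem pathAlg_iso_jacobian_general (k : Type) [Field k] (hchar : (3 : k) ≠ 0)
    (n : ℕ) (Q : QuiverData (n - 1)) (c : Fin (n - 1)) (φ : Q.E)
    (h : Q.IsTilde c φ) :
    Nonempty (PathAlg k Q ≃ₐ[k] JacAlg k Q) :=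
  have hQ := QuiverData.cycTripleUnique_of_cycles_length_three h.no_mult h.cycles_length_three
  ⟨RingQuot.algEquivOfRel (mkAlgHom_jacRel_eq_of_pathRel hchar hQ) mkAlgHom_pathRel_eq_of_jacRel⟩

/-- If `char k ≠ 3`, the endomorphism algebra `A = kQ̃/I_{Q̃}` of a maximal
rigid object of the cluster tube `C_n` is isomorphic to the Jacobian algebra of
the quiver with potential `(Q̃, W̃)`, where `W̃` is the sum of the cube of the
unique loop and all oriented 3-cycles of `Q̃`. -/
theorem pathAlg_iso_jacobian (k : Type) [Field k] (hchar : (3 : k) ≠ 0)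
    (n : ℕ) (hn : 2 ≤ n) (Q : QuiverData (n - 1)) (c : Fin (n - 1)) (φ : Q.E)
    (h : Q.IsTilde c φ) :
    Nonempty (PathAlg k Q ≃ₐ[k] JacAlg k Q) :=
  pathAlg_iso_jacobian_general k hchar n Q c φ h
end
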